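/- Let s ∈ ℝ, 0 < p ≤ ∞, and υ ∈ 𝒢(δ₁, δ₂; ω) with δ₁ ≤ δ₂, 0 ≤ ω ≤ n(δ₂ − δ₁). If either q ∈ (0,∞) and δ₁ > 1/p, or q = ∞ and δ₁ ≥ 1/p, then for any scalar sequence t = {t_Q}_{Q∈𝒟}, ‖t‖_{ȧ_{p,q}^{s,υ}} ≍ sup_{P∈𝒟} |P|^{−s/n + 1/p − 1/2} |t_P| / υ(P), with constants independent of t. -/

import Mathlib

open MeasureTheory
open scoped BigOperators ENNReal

/-- A dyadic cube `2^{-j}([0,1)^n + k)` in `ℝⁿ`, encoded by its generation `j`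
and its position `k`. -/
structure DyadicCube (n : ℕ) where
  j : ℤ
  k : Fin n → ℤ
deriving DecidableEq

namespace DyadicCube

variable {n : ℕ}

/-- The side length `ℓ(Q) = 2^{-j}`. -/
noncomputable def len (Q : DyadicCube n) : ℝ := (2 : ℝ) ^ (-Q.j)

/-- The lower-left corner `x_Q = 2^{-j} k`. -/
noncomputable def corner (Q : DyadicCube n) (i : Fin n) : ℝ := (2 : ℝ) ^ (-Q.j) * Q.k i

/-- The volume `|Q| = 2^{-jn}`. -/
noncomputable def vol (Q : DyadicCube n) : ℝ := Q.len ^ (n : ℕ)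

/-- The cube `Q` as a subset of `ℝⁿ`. -/
noncomputable def toSet (Q : DyadicCube n) : Set (Fin n → ℝ) :=
  {x | ∀ i, Q.corner i ≤ x i ∧ x i < Q.corner i + Q.len}

/-- The Euclidean distance `|x_Q - x_R|` between the corners of two dyadic cubes. -/
noncomputable def cdist (Q R : DyadicCube n) : ℝ :=
  Real.sqrt (∑ i, (Q.corner i - R.corner i) ^ 2)

end DyadicCube

/-- `υ : 𝒟 → (0,∞)` is a `(δ₁, δ₂; ω)`-order growth function: it is positive and
`υ(Q)/υ(R) ≤ C (1 + |x_Q - x_R|/(ℓ(Q) ∨ ℓ(R)))^ω (|Q|/|R|)^{δ₁}` when `ℓ(Q) ≤ ℓ(R)`,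
with exponent `δ₂` in place of `δ₁` when `ℓ(R) < ℓ(Q)`. -/
def IsGrowthFunction (n : ℕ) (δ₁ δ₂ ω : ℝ) (υ : DyadicCube n → ℝ) : Prop :=
  (∀ Q, 0 < υ Q) ∧ ∃ C : ℝ, 0 < C ∧ ∀ Q R : DyadicCube n,
    υ Q / υ R ≤ C * (1 + Q.cdist R / max Q.len R.len) ^ ω *
      (if Q.len ≤ R.len then (Q.vol / R.vol) ^ δ₁ else (Q.vol / R.vol) ^ δ₂)

open MeasureTheory

/-- The `ℓ^q`-norm (over `ℤ`) of a family of extended nonnegative reals,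
with the usual modification (supremum) when `q = ∞`. -/
noncomputable def lqNorm (q : ℝ≥0∞) (a : ℤ → ℝ≥0∞) : ℝ≥0∞ :=
  if q = ⊤ then ⨆ j, a j else (∑' j, a j ^ q.toReal) ^ (1 / q.toReal)

/-- The `ℓ^q(L^p)` norm `(∑_j ‖f_j‖_{L^p}^q)^{1/q}` of a sequence of functions. -/
noncomputable def LBnorm (n : ℕ) (p : ℝ) (q : ℝ≥0∞) (f : ℤ → (Fin n → ℝ) → ℝ) : ℝ≥0∞ :=
  lqNorm q (fun j => (∫⁻ x, ENNReal.ofReal |f j x| ^ p) ^ (1 / p))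

/-- The `L^p(ℓ^q)` norm `‖(∑_j |f_j|^q)^{1/q}‖_{L^p}` of a sequence of functions. -/
noncomputable def LFnorm (n : ℕ) (p : ℝ) (q : ℝ≥0∞) (f : ℤ → (Fin n → ℝ) → ℝ) : ℝ≥0∞ :=
  (∫⁻ x, (lqNorm q (fun j => ENNReal.ofReal |f j x|)) ^ p) ^ (1 / p)

/-- The truncation `{f_j 1_P 1_{j ≥ j_P}}_j` of a sequence of functions to a dyadic cube `P`. -/
noncomputable def truncate (n : ℕ) (P : DyadicCube n) (f : ℤ → (Fin n → ℝ) → ℝ) :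
    ℤ → (Fin n → ℝ) → ℝ :=
  fun j => if P.j ≤ j then P.toSet.indicator (f j) else 0

/-- The norm `‖{f_j}‖_{LḂ^υ_{p,q}} = sup_P υ(P)⁻¹ ‖{f_j 1_P 1_{j ≥ j_P}}‖_{ℓ^q(L^p)}`. -/
noncomputable def LBvNorm (n : ℕ) (p : ℝ) (q : ℝ≥0∞) (υ : DyadicCube n → ℝ)
    (f : ℤ → (Fin n → ℝ) → ℝ) : ℝ≥0∞ :=
  ⨆ P : DyadicCube n, (ENNReal.ofReal (υ P))⁻¹ * LBnorm n p q (truncate n P f)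

/-- The norm `‖{f_j}‖_{LḞ^υ_{p,q}} = sup_P υ(P)⁻¹ ‖{f_j 1_P 1_{j ≥ j_P}}‖_{L^p(ℓ^q)}`. -/
noncomputable def LFvNorm (n : ℕ) (p : ℝ) (q : ℝ≥0∞) (υ : DyadicCube n → ℝ)
    (f : ℤ → (Fin n → ℝ) → ℝ) : ℝ≥0∞ :=
  ⨆ P : DyadicCube n, (ENNReal.ofReal (υ P))⁻¹ * LFnorm n p q (truncate n P f)

/-- The `ℓ^q(L^p)` norm with exponent `p ∈ (0,∞]` (via `eLpNorm`). -/
noncomputable def LBnormE (n : ℕ) (p q : ℝ≥0∞) (f : ℤ → (Fin n → ℝ) → ℝ) : ℝ≥0∞ :=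
  lqNorm q (fun j => eLpNorm (f j) p volume)

/-- The norm `sup_P υ(P)⁻¹ ‖{f_j 1_P 1_{j ≥ j_P}}‖_{ℓ^q(L^p)}` with `p ∈ (0,∞]`. -/
noncomputable def LBvNormE (n : ℕ) (p q : ℝ≥0∞) (υ : DyadicCube n → ℝ)
    (f : ℤ → (Fin n → ℝ) → ℝ) : ℝ≥0∞ :=
  ⨆ P : DyadicCube n, (ENNReal.ofReal (υ P))⁻¹ * LBnormE n p q (truncate n P f)

/-- The weighted `L^p(ℓ^q)` norm `sup_P υ(P)⁻¹ ‖{f_j 1_P 1_{j ≥ j_P}}‖_{L^p(ℓ^q)}`. -/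
noncomputable def LFvNorm' (n : ℕ) (p : ℝ) (q : ℝ≥0∞) (υ : DyadicCube n → ℝ)
    (f : ℤ → (Fin n → ℝ) → ℝ) : ℝ≥0∞ :=
  ⨆ P : DyadicCube n, (ENNReal.ofReal (υ P))⁻¹ * LFnorm n p q (truncate n P f)

/-- The unique dyadic cube of generation `j` containing the point `x`. -/
noncomputable def cubeAt (n : ℕ) (j : ℤ) (x : Fin n → ℝ) : DyadicCube n :=
  ⟨j, fun i => ⌊(2 : ℝ) ^ j * x i⌋⟩

/-- The function `x ↦ 2^{js} ∑_{Q ∈ 𝒟_j} |Q|^{-1/2} 1_Q(x) t_Q`. -/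
noncomputable def scalarFn (n : ℕ) (s : ℝ) (t : DyadicCube n → ℝ) (j : ℤ)
    (x : Fin n → ℝ) : ℝ :=
  (2 : ℝ) ^ ((j : ℝ) * s) * (Real.sqrt (cubeAt n j x).vol)⁻¹ * t (cubeAt n j x)

/-- The `ḟ^{s - n/p}_{∞,∞}`-norm `sup_P |P|^{-s/n + 1/p - 1/2} |t_P| / υ(P)`. -/
noncomputable def fInftyBound (n : ℕ) (s : ℝ) (p : ℝ≥0∞) (υ : DyadicCube n → ℝ)
    (t : DyadicCube n → ℝ) : ℝ≥0∞ :=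
  ⨆ P : DyadicCube n,
    ENNReal.ofReal (P.vol ^ (-s / (n : ℝ) + (p⁻¹).toReal - 1 / 2) * |t P| / υ P)

namespace DyadicCube
variable {n : ℕ}

lemma len_pos (Q : DyadicCube n) : 0 < Q.len := zpow_pos two_pos _

lemma vol_pos (Q : DyadicCube n) : 0 < Q.vol := pow_pos Q.len_pos n

lemma len_eq_rpow (Q : DyadicCube n) : Q.len = (2:ℝ) ^ (-(Q.j:ℝ)) := by
  rw [len, ← Real.rpow_intCast]; push_cast; rfl

lemma vol_eq_rpow (Q : DyadicCube n) : Q.vol = (2:ℝ) ^ (-(Q.j:ℝ) * n) := by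
  rw [vol, len_eq_rpow, ← Real.rpow_natCast ((2:ℝ) ^ (-(Q.j:ℝ))) n,
    ← Real.rpow_mul (by norm_num)]

lemma vol_rpow (Q : DyadicCube n) (a : ℝ) : Q.vol ^ a = (2:ℝ) ^ (-(Q.j:ℝ) * n * a) := by
  rw [vol_eq_rpow, ← Real.rpow_mul (by norm_num)]

lemma sqrt_vol (Q : DyadicCube n) : Real.sqrt Q.vol = (2:ℝ) ^ (-(Q.j:ℝ) * n * (1/2)) := by
  rw [Real.sqrt_eq_rpow, vol_rpow]

lemma toSet_eq (Q : DyadicCube n) :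
    Q.toSet = Set.univ.pi (fun i => Set.Ico (Q.corner i) (Q.corner i + Q.len)) := by
  ext x; simp [toSet, Set.mem_pi, Set.mem_Ico]

lemma measurableSet_toSet (Q : DyadicCube n) : MeasurableSet Q.toSet := by
  rw [toSet_eq]; exact MeasurableSet.univ_pi fun i => measurableSet_Ico

lemma volume_toSet (Q : DyadicCube n) : volume Q.toSet = ENNReal.ofReal Q.vol := by
  rw [toSet_eq, volume_pi_pi]
  have h : ∀ i : Fin n, volume (Set.Ico (Q.corner i) (Q.corner i + Q.len))
      = ENNReal.ofReal Q.len := by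
    intro i; rw [Real.volume_Ico, add_sub_cancel_left]
  rw [Finset.prod_congr rfl (fun i _ => h i), Finset.prod_const, Finset.card_univ,
    Fintype.card_fin, vol, ENNReal.ofReal_pow Q.len_pos.le]

end DyadicCube

variable {n : ℕ}

lemma two_zpow_mul_neg (j : ℤ) : (2:ℝ) ^ j * (2:ℝ) ^ (-j) = 1 := by
  rw [← zpow_add₀ (two_ne_zero)]; simp

lemma cubeAt_eq_of_mem {P : DyadicCube n} {x : Fin n → ℝ} (hx : x ∈ P.toSet) :
    cubeAt n P.j x = P := by
  obtain ⟨j, k⟩ := P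
  simp only [cubeAt, DyadicCube.mk.injEq]
  refine ⟨trivial, funext fun i => ?_⟩
  have h := hx i
  simp only [DyadicCube.corner, DyadicCube.len] at h
  have h2 : (0:ℝ) < (2:ℝ) ^ j := zpow_pos two_pos _
  have hu : (2:ℝ) ^ j * (2:ℝ) ^ (-j) = 1 := two_zpow_mul_neg j
  have e1 : (2:ℝ) ^ j * ((2:ℝ) ^ (-j) * (k i : ℝ)) = (k i : ℝ) := by
    rw [← mul_assoc, hu, one_mul]
  have e2 : (2:ℝ) ^ j * ((2:ℝ) ^ (-j) * (k i : ℝ) + (2:ℝ) ^ (-j)) = (k i : ℝ) + 1 := by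
    rw [mul_add, ← mul_assoc, hu, one_mul]
  rw [Int.floor_eq_iff]
  constructor
  · linarith [mul_le_mul_of_nonneg_left h.1 h2.le, e1]
  · push_cast
    linarith [mul_lt_mul_of_pos_left h.2 h2, e2]

lemma cubeAt_corner_bounds {P : DyadicCube n} {x : Fin n → ℝ} (hx : x ∈ P.toSet)
    {j : ℤ} (hj : P.j ≤ j) (i : Fin n) :
    P.corner i ≤ (cubeAt n j x).corner i ∧ (cubeAt n j x).corner i ≤ x i := by
  have h2 : (0:ℝ) < (2:ℝ) ^ j := zpow_pos two_pos _
  have h2' : (0:ℝ) < (2:ℝ) ^ (-j) := zpow_pos two_pos _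
  have hu : (2:ℝ) ^ j * (2:ℝ) ^ (-j) = 1 := two_zpow_mul_neg j
  have h := hx i
  simp only [DyadicCube.corner] at h ⊢
  constructor
  · -- lower bound
    have hzr : ((2 ^ (j - P.j).toNat * P.k i : ℤ) : ℝ) = (2:ℝ) ^ (j - P.j) * P.k i := by
      push_cast
      rw [← zpow_natCast (2:ℝ), Int.toNat_of_nonneg (by omega : (0:ℤ) ≤ j - P.j)]
    have e : (2:ℝ) ^ (j - P.j) * (P.k i : ℝ) = (2:ℝ) ^ j * ((2:ℝ) ^ (-P.j) * P.k i) := by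
      rw [← mul_assoc, ← zpow_add₀ (two_ne_zero : (2:ℝ) ≠ 0),
        show j + -P.j = j - P.j from by ring]
    have hz : ((2 ^ (j - P.j).toNat * P.k i : ℤ) : ℝ) ≤ (2:ℝ) ^ j * x i := by
      rw [hzr, e]
      exact mul_le_mul_of_nonneg_left h.1 h2.le
    have hfl : ((2:ℤ) ^ (j - P.j).toNat * P.k i) ≤ ⌊(2:ℝ) ^ j * x i⌋ := Int.le_floor.mpr hz
    have step : (2:ℝ) ^ (-j) * ((2 ^ (j - P.j).toNat * P.k i : ℤ) : ℝ)
        ≤ (2:ℝ) ^ (-j) * (⌊(2:ℝ) ^ j * x i⌋ : ℝ) :=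
      mul_le_mul_of_nonneg_left (by exact_mod_cast hfl) h2'.le
    refine le_trans (le_of_eq ?_) step
    rw [hzr, ← mul_assoc, ← zpow_add₀ (two_ne_zero : (2:ℝ) ≠ 0),
      show -j + (j - P.j) = -P.j from by ring]
  · -- upper bound
    calc (2:ℝ) ^ (-j) * (⌊(2:ℝ) ^ j * x i⌋ : ℝ)
        ≤ (2:ℝ) ^ (-j) * ((2:ℝ) ^ j * x i) :=
          mul_le_mul_of_nonneg_left (Int.floor_le _) h2'.le
      _ = x i := by rw [← mul_assoc, mul_comm ((2:ℝ)^(-j)), hu, one_mul]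

lemma cubeAt_len_le {P : DyadicCube n} {j : ℤ} (hj : P.j ≤ j) (x : Fin n → ℝ) :
    (cubeAt n j x).len ≤ P.len := by
  simp only [DyadicCube.len, cubeAt]
  exact zpow_le_zpow_right₀ one_le_two (by omega)

lemma cubeAt_cdist_le {P : DyadicCube n} {x : Fin n → ℝ} (hx : x ∈ P.toSet)
    {j : ℤ} (hj : P.j ≤ j) (hn : 0 < n) :
    (cubeAt n j x).cdist P ≤ n * P.len := by
  have hb : ∀ i, |(cubeAt n j x).corner i - P.corner i| ≤ P.len := by
    intro i
    obtain ⟨h1, h2⟩ := cubeAt_corner_bounds hx hj i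
    have h3 := (hx i).2
    rw [abs_le]
    constructor <;> nlinarith [P.len_pos]
  unfold DyadicCube.cdist
  have hsum : ∑ i, ((cubeAt n j x).corner i - P.corner i) ^ 2 ≤ (n : ℝ) * P.len ^ 2 := by
    calc ∑ i, ((cubeAt n j x).corner i - P.corner i) ^ 2
        ≤ ∑ _i : Fin n, P.len ^ 2 := by
          refine Finset.sum_le_sum fun i _ => ?_
          have := hb i
          nlinarith [abs_nonneg ((cubeAt n j x).corner i - P.corner i),
            sq_abs ((cubeAt n j x).corner i - P.corner i)]
      _ = (n : ℝ) * P.len ^ 2 := by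
          rw [Finset.sum_const, Finset.card_univ, Fintype.card_fin, nsmul_eq_mul]
  have h1n : (1:ℝ) ≤ n := by exact_mod_cast hn
  calc Real.sqrt (∑ i, ((cubeAt n j x).corner i - P.corner i) ^ 2)
      ≤ Real.sqrt ((n : ℝ) * P.len ^ 2) := Real.sqrt_le_sqrt hsum
    _ ≤ Real.sqrt ((n : ℝ)^2 * P.len ^ 2) := by
        apply Real.sqrt_le_sqrt
        exact mul_le_mul_of_nonneg_right (by nlinarith) (sq_nonneg P.len)
    _ = (n : ℝ) * P.len := by
        rw [← mul_pow, Real.sqrt_sq (mul_nonneg (Nat.cast_nonneg n) P.len_pos.le)]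

variable {n : ℕ}

lemma le_lqNorm {q : ℝ≥0∞} (hq : q ≠ 0) (a : ℤ → ℝ≥0∞) (j₀ : ℤ) : a j₀ ≤ lqNorm q a := by
  unfold lqNorm
  split_ifs with h
  · exact le_iSup a j₀
  · have hqt : 0 < q.toReal := ENNReal.toReal_pos hq h
    calc a j₀ = ((a j₀) ^ q.toReal) ^ (1/q.toReal) := by
          rw [← ENNReal.rpow_mul, mul_one_div, div_self hqt.ne', ENNReal.rpow_one]
      _ ≤ _ := ENNReal.rpow_le_rpow (ENNReal.le_tsum j₀) (by positivity)

lemma lqNorm_zero {q : ℝ≥0∞} (hq : q ≠ 0) : lqNorm q (fun _ => 0) = 0 := by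
  unfold lqNorm
  split_ifs with h
  · simp
  · have hqt : 0 < q.toReal := ENNReal.toReal_pos hq h
    simp [ENNReal.zero_rpow_of_pos hqt,
      ENNReal.zero_rpow_of_pos (show (0:ℝ) < 1/q.toReal by positivity), hqt]

noncomputable def geomK (q ρ : ℝ≥0∞) : ℝ≥0∞ :=
  if q = ⊤ then 1 else ((1 - ρ ^ q.toReal)⁻¹) ^ (1/q.toReal)

lemma geomK_ne_top {q ρ : ℝ≥0∞} (hq : q ≠ 0) (hρ : q ≠ ⊤ → ρ < 1) : geomK q ρ ≠ ⊤ := by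
  unfold geomK
  split_ifs with h
  · exact ENNReal.one_ne_top
  · have hqt : 0 < q.toReal := ENNReal.toReal_pos hq h
    have hlt : ρ ^ q.toReal < 1 := ENNReal.rpow_lt_one (hρ h) hqt
    refine ENNReal.rpow_ne_top_of_nonneg (by positivity) ?_
    rw [Ne, ENNReal.inv_eq_top, tsub_eq_zero_iff_le]
    exact not_le.mpr hlt

lemma geom_tsum (σ B : ℝ≥0∞) (j₀ : ℤ) :
    ∑' j : ℤ, (if j₀ ≤ j then B * σ ^ (j - j₀).toNat else 0) = B * (1 - σ)⁻¹ := by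
  rw [← Function.Injective.tsum_eq (g := fun m : ℕ => j₀ + (m:ℤ))
    (f := fun j : ℤ => if j₀ ≤ j then B * σ ^ (j - j₀).toNat else 0)
    (fun a b hab => by
      have : (a : ℤ) = b := add_left_cancel hab
      exact_mod_cast this) ?_]
  · have he : ∀ m : ℕ, (if j₀ ≤ j₀ + (m:ℤ) then B * σ ^ ((j₀ + (m:ℤ) - j₀).toNat) else 0)
        = B * σ ^ m := by
      intro m
      rw [if_pos (by omega), add_sub_cancel_left, Int.toNat_natCast]
    rw [tsum_congr he, ENNReal.tsum_mul_left, ENNReal.tsum_geometric]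
  · intro j hj
    have hj' : j₀ ≤ j := by
      by_contra hc
      simp [Function.mem_support, if_neg hc] at hj
    exact ⟨(j - j₀).toNat, by show j₀ + ((j - j₀).toNat : ℤ) = j; omega⟩

lemma lqNorm_le_geom {q : ℝ≥0∞} (hq : q ≠ 0) {ρ B : ℝ≥0∞} (hρ1 : ρ ≤ 1)
    {a : ℤ → ℝ≥0∞} (j₀ : ℤ)
    (ha : ∀ j, a j ≤ if j₀ ≤ j then B * ρ ^ (j - j₀).toNat else 0) :
    lqNorm q a ≤ geomK q ρ * B := by
  unfold lqNorm geomK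
  split_ifs with h
  · rw [one_mul]
    refine iSup_le fun j => (ha j).trans ?_
    split_ifs with h'
    · calc B * ρ ^ _ ≤ B * 1 := mul_le_mul_right (pow_le_one' hρ1 _) B
        _ = B := mul_one B
    · exact zero_le
  · have hqt : 0 < q.toReal := ENNReal.toReal_pos hq h
    have key : ∀ j : ℤ, a j ^ q.toReal
        ≤ (if j₀ ≤ j then B ^ q.toReal * (ρ ^ q.toReal) ^ (j - j₀).toNat else 0) := by
      intro j
      refine (ENNReal.rpow_le_rpow (ha j) hqt.le).trans ?_
      split_ifs with h'
      · rw [ENNReal.mul_rpow_of_nonneg _ _ hqt.le, ← ENNReal.rpow_natCast ρ,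
          ← ENNReal.rpow_mul, mul_comm ((j - j₀).toNat : ℝ), ENNReal.rpow_mul,
          ENNReal.rpow_natCast]
      · rw [ENNReal.zero_rpow_of_pos hqt]
    calc (∑' j, a j ^ q.toReal) ^ (1/q.toReal)
        ≤ (B ^ q.toReal * (1 - ρ ^ q.toReal)⁻¹) ^ (1/q.toReal) := by
          refine ENNReal.rpow_le_rpow ?_ (by positivity)
          exact (ENNReal.tsum_le_tsum key).trans (geom_tsum _ _ _).le
      _ = ((1 - ρ ^ q.toReal)⁻¹) ^ (1/q.toReal) * B := by
          rw [ENNReal.mul_rpow_of_nonneg _ _ (by positivity), ← ENNReal.rpow_mul,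
            mul_one_div, div_self hqt.ne', ENNReal.rpow_one, mul_comm]

lemma eLpNorm_indicator_const_eq' {S : Set (Fin n → ℝ)} (hS : MeasurableSet S)
    (hS0 : volume S ≠ 0) (c : ℝ) (p : ℝ≥0∞) (hp : p ≠ 0) :
    eLpNorm (S.indicator fun _ => c) p volume
      = ENNReal.ofReal |c| * (volume S) ^ (p⁻¹).toReal := by
  by_cases hptop : p = ⊤
  · subst hptop
    rw [eLpNorm_exponent_top, eLpNormEssSup_indicator_const_eq _ _ hS0]
    simp [Real.enorm_eq_ofReal_abs]
  · rw [eLpNorm_indicator_const hS hp hptop, Real.enorm_eq_ofReal_abs,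
      ENNReal.toReal_inv, one_div]

variable {n : ℕ}

lemma growth_bound {δ₁ δ₂ ω : ℝ} {υ : DyadicCube n → ℝ} (hpos : ∀ Q, 0 < υ Q)
    (hω0 : 0 ≤ ω) {C₀ : ℝ} (hC₀ : 0 ≤ C₀)
    (hg : ∀ Q R : DyadicCube n, υ Q / υ R ≤ C₀ * (1 + Q.cdist R / max Q.len R.len) ^ ω *
      (if Q.len ≤ R.len then (Q.vol / R.vol) ^ δ₁ else (Q.vol / R.vol) ^ δ₂))
    {Q P : DyadicCube n} (hlen : Q.len ≤ P.len) (hdist : Q.cdist P ≤ n * P.len) :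
    υ Q ≤ (C₀ * (1 + (n:ℝ)) ^ ω) * υ P * (Q.vol / P.vol) ^ δ₁ := by
  have hP := hpos P
  have h := hg Q P
  rw [if_pos hlen, max_eq_right hlen] at h
  have hcd : 0 ≤ Q.cdist P := Real.sqrt_nonneg _
  have hlp := P.len_pos
  have h1 : (1 + Q.cdist P / P.len) ^ ω ≤ (1 + (n:ℝ)) ^ ω := by
    apply Real.rpow_le_rpow (by positivity) ?_ hω0
    rw [add_le_add_iff_left, div_le_iff₀ hlp]
    exact hdist
  have h4 : (0:ℝ) ≤ (Q.vol / P.vol) ^ δ₁ :=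
    Real.rpow_nonneg (div_nonneg Q.vol_pos.le P.vol_pos.le) _
  rw [div_le_iff₀ hP] at h
  calc υ Q ≤ C₀ * (1 + Q.cdist P / P.len) ^ ω * (Q.vol / P.vol) ^ δ₁ * υ P := h
    _ ≤ C₀ * (1 + (n:ℝ)) ^ ω * (Q.vol / P.vol) ^ δ₁ * υ P := by
        have := mul_le_mul_of_nonneg_left h1 hC₀
        nlinarith [hP.le, h4, mul_le_mul_of_nonneg_right
          (mul_le_mul_of_nonneg_left h1 hC₀) h4]
    _ = (C₀ * (1 + (n:ℝ)) ^ ω) * υ P * (Q.vol / P.vol) ^ δ₁ := by ring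

lemma rpow_neg_int_mul {m : ℤ} (hm : 0 ≤ m) (c : ℝ) :
    (2:ℝ) ^ (-(m:ℝ) * c) = ((2:ℝ) ^ (-c)) ^ m.toNat := by
  rw [← Real.rpow_natCast ((2:ℝ)^(-c)), ← Real.rpow_mul (by norm_num)]
  congr 1
  have : ((m.toNat : ℤ) : ℝ) = (m:ℝ) := by exact_mod_cast congrArg Int.cast (Int.toNat_of_nonneg hm)
  push_cast at this
  rw [this]
  ring

lemma scalarFn_ptwise_bound (hn : 0 < n) (s δ₁ r : ℝ)
    {υ : DyadicCube n → ℝ} (hpos : ∀ Q, 0 < υ Q) {C₁ : ℝ}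
    (hgr : ∀ Q P : DyadicCube n, Q.len ≤ P.len → Q.cdist P ≤ n * P.len →
      υ Q ≤ C₁ * υ P * (Q.vol / P.vol) ^ δ₁)
    {t : DyadicCube n → ℝ} {M' : ℝ}
    (hM : ∀ Q : DyadicCube n, Q.vol ^ (-s/(n:ℝ) + r - 1/2) * |t Q| / υ Q ≤ M')
    {P : DyadicCube n} {x : Fin n → ℝ} (hx : x ∈ P.toSet) {j : ℤ} (hj : P.j ≤ j) :
    |scalarFn n s t j x| ≤ M' * C₁ * υ P *
      (2:ℝ) ^ ((j:ℝ) * n * r - ((j:ℝ) - (P.j:ℝ)) * n * δ₁) := by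
  set e := -s/(n:ℝ) + r - 1/2 with he
  set Q := cubeAt n j x with hQdef
  have hQj : Q.j = j := rfl
  have hvQ := Q.vol_pos
  have hvP := P.vol_pos
  have hυQ := hpos Q
  have hυP := hpos P
  have hsq : 0 < Real.sqrt Q.vol := Real.sqrt_pos.mpr hvQ
  have hM' : 0 ≤ M' := le_trans (by positivity) (hM Q)
  have ht : |t Q| ≤ M' * υ Q * Q.vol ^ (-e) := by
    have h1 : Q.vol ^ e * |t Q| ≤ M' * υ Q := (div_le_iff₀ hυQ).mp (hM Q)
    have h2 : (0:ℝ) < Q.vol ^ e := Real.rpow_pos_of_pos hvQ e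
    have h3 : Q.vol ^ (-e) = (Q.vol ^ e)⁻¹ := Real.rpow_neg hvQ.le e
    rw [h3]
    calc |t Q| = (Q.vol ^ e * |t Q|) * (Q.vol ^ e)⁻¹ := by field_simp
      _ ≤ (M' * υ Q) * (Q.vol ^ e)⁻¹ := mul_le_mul_of_nonneg_right h1 (by positivity)
      _ = M' * υ Q * (Q.vol ^ e)⁻¹ := rfl
  have hυb : υ Q ≤ C₁ * υ P * (Q.vol / P.vol) ^ δ₁ :=
    hgr Q P (cubeAt_len_le hj x) (cubeAt_cdist_le hx hj hn)
  have habs : |scalarFn n s t j x|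
      = (2:ℝ) ^ ((j:ℝ) * s) * (Real.sqrt Q.vol)⁻¹ * |t Q| := by
    show |(2:ℝ) ^ ((j:ℝ)*s) * (Real.sqrt Q.vol)⁻¹ * t Q| = _
    rw [abs_mul, abs_mul, abs_of_pos (Real.rpow_pos_of_pos two_pos _),
      abs_of_pos (inv_pos.mpr hsq)]
  have key : (2:ℝ)^((j:ℝ)*s) * (Real.sqrt Q.vol)⁻¹ * (Q.vol ^ (-e) * (Q.vol / P.vol) ^ δ₁)
      = (2:ℝ) ^ ((j:ℝ) * n * r - ((j:ℝ) - (P.j:ℝ)) * n * δ₁) := by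
    rw [Q.sqrt_vol, Q.vol_rpow (-e), Q.vol_eq_rpow, P.vol_eq_rpow, hQj,
      ← Real.rpow_sub two_pos, ← Real.rpow_mul (by norm_num : (0:ℝ) ≤ 2),
      ← Real.rpow_neg (by norm_num : (0:ℝ) ≤ 2)]
    rw [← Real.rpow_add two_pos, ← Real.rpow_add two_pos, ← Real.rpow_add two_pos]
    congr 1
    have hn' : (n:ℝ) ≠ 0 := Nat.cast_ne_zero.mpr hn.ne'
    rw [he]
    field_simp
    ring
  have hnn : (0:ℝ) ≤ (2:ℝ) ^ ((j:ℝ)*s) * (Real.sqrt Q.vol)⁻¹ := by positivity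
  calc |scalarFn n s t j x|
      = (2:ℝ)^((j:ℝ)*s) * (Real.sqrt Q.vol)⁻¹ * |t Q| := habs
    _ ≤ (2:ℝ)^((j:ℝ)*s) * (Real.sqrt Q.vol)⁻¹ * (M' * υ Q * Q.vol ^ (-e)) :=
        mul_le_mul_of_nonneg_left ht hnn
    _ ≤ (2:ℝ)^((j:ℝ)*s) * (Real.sqrt Q.vol)⁻¹
        * (M' * (C₁ * υ P * (Q.vol / P.vol) ^ δ₁) * Q.vol ^ (-e)) := by
        refine mul_le_mul_of_nonneg_left ?_ hnn
        refine mul_le_mul_of_nonneg_right (mul_le_mul_of_nonneg_left hυb hM') ?_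
        positivity
    _ = M' * C₁ * υ P *
        ((2:ℝ)^((j:ℝ)*s) * (Real.sqrt Q.vol)⁻¹ * (Q.vol ^ (-e) * (Q.vol / P.vol) ^ δ₁)) := by
        ring
    _ = M' * C₁ * υ P * (2:ℝ) ^ ((j:ℝ) * n * r - ((j:ℝ) - (P.j:ℝ)) * n * δ₁) := by
        rw [key]

/-- Let `s ∈ ℝ`, `0 < p ≤ ∞`, `υ ∈ 𝒢(δ₁, δ₂; ω)` with `δ₁ ≤ δ₂` and
`0 ≤ ω ≤ n(δ₂ - δ₁)`. If either `q < ∞` and `δ₁ > 1/p`, or `q = ∞` and `δ₁ ≥ 1/p`, then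
`‖t‖_{ȧ^{s,υ}_{p,q}} ≍ sup_P |P|^{-s/n + 1/p - 1/2} |t_P| / υ(P)` uniformly in `t`,
both for `a = b` and (when `p < ∞`) for `a = f`. -/
theorem supercritical_norm_equiv (n : ℕ) (hn : 0 < n) (s : ℝ)
    (δ₁ δ₂ ω : ℝ) (hδ : δ₁ ≤ δ₂) (hω0 : 0 ≤ ω) (hω : ω ≤ (n : ℝ) * (δ₂ - δ₁))
    (υ : DyadicCube n → ℝ) (hυ : IsGrowthFunction n δ₁ δ₂ ω υ)
    (p q : ℝ≥0∞) (hp : 0 < p) (hq : 0 < q)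
    (hcase : (q ≠ ⊤ ∧ (p⁻¹).toReal < δ₁) ∨ (q = ⊤ ∧ (p⁻¹).toReal ≤ δ₁)) :
    ∃ c C : ℝ, 0 < c ∧ 0 < C ∧ ∀ t : DyadicCube n → ℝ,
      (ENNReal.ofReal c * fInftyBound n s p υ t ≤ LBvNormE n p q υ (scalarFn n s t) ∧
        LBvNormE n p q υ (scalarFn n s t) ≤ ENNReal.ofReal C * fInftyBound n s p υ t) ∧
      (p ≠ ⊤ →
        ENNReal.ofReal c * fInftyBound n s p υ t ≤
          LFvNorm' n p.toReal q υ (scalarFn n s t) ∧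
        LFvNorm' n p.toReal q υ (scalarFn n s t) ≤
          ENNReal.ofReal C * fInftyBound n s p υ t) := by
  obtain ⟨hpos, C₀, hC₀, hg⟩ := hυ
  have hn' : (n:ℝ) ≠ 0 := Nat.cast_ne_zero.mpr hn.ne'
  set r : ℝ := (p⁻¹).toReal with hr
  have hr0 : 0 ≤ r := ENNReal.toReal_nonneg
  have hδr : r ≤ δ₁ := by rcases hcase with ⟨_, h⟩ | ⟨_, h⟩; exacts [h.le, h]
  have hq0 : q ≠ 0 := hq.ne'
  have hp0 : p ≠ 0 := hp.ne'
  set e : ℝ := -s/(n:ℝ) + r - 1/2 with he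
  set C₁ : ℝ := C₀ * (1 + (n:ℝ)) ^ ω with hC₁def
  have hC₁ : 0 < C₁ := mul_pos hC₀ (Real.rpow_pos_of_pos (by positivity) ω)
  have hgr : ∀ Q P : DyadicCube n, Q.len ≤ P.len → Q.cdist P ≤ n * P.len →
      υ Q ≤ C₁ * υ P * (Q.vol / P.vol) ^ δ₁ := fun Q P h1 h2 =>
    growth_bound hpos hω0 hC₀.le hg h1 h2
  set ρr : ℝ := (2:ℝ) ^ (-((n:ℝ) * (δ₁ - r))) with hρrdef
  set ρ : ℝ≥0∞ := ENNReal.ofReal ρr with hρdef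
  have hρr_pos : 0 < ρr := Real.rpow_pos_of_pos two_pos _
  have hρ1 : ρ ≤ 1 := by
    rw [hρdef, ← ENNReal.ofReal_one]
    refine ENNReal.ofReal_le_ofReal
      (Real.rpow_le_one_of_one_le_of_nonpos one_le_two ?_)
    have : 0 ≤ (n:ℝ) * (δ₁ - r) := mul_nonneg (Nat.cast_nonneg n) (by linarith)
    linarith
  have hρlt : q ≠ ⊤ → ρ < 1 := by
    intro hqt
    rcases hcase with ⟨_, hlt⟩ | ⟨hq', _⟩
    · rw [hρdef]
      refine ENNReal.ofReal_lt_one.mpr ?_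
      apply Real.rpow_lt_one_of_one_lt_of_neg one_lt_two
      have hnpos : (0:ℝ) < n := by exact_mod_cast hn
      have : (0:ℝ) < (n:ℝ) * (δ₁ - r) := mul_pos hnpos (by linarith)
      linarith
    · exact absurd hq' hqt
  set K : ℝ≥0∞ := geomK q ρ * ENNReal.ofReal C₁ with hKdef
  have hKtop : K ≠ ⊤ := ENNReal.mul_ne_top (geomK_ne_top hq0 hρlt) ENNReal.ofReal_ne_top
  have hCpos : (0:ℝ) < K.toReal + 1 := by positivity
  have hKC : K ≤ ENNReal.ofReal (K.toReal + 1) := by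
    calc K = ENNReal.ofReal K.toReal := (ENNReal.ofReal_toReal hKtop).symm
      _ ≤ ENNReal.ofReal (K.toReal + 1) := ENNReal.ofReal_le_ofReal (by linarith)
  refine ⟨1, K.toReal + 1, one_pos, hCpos, fun t => ?_⟩
  set f := scalarFn n s t with hfdef
  set M := fInftyBound n s p υ t with hMdef
  -- the constant value on a cube
  set c₀ : DyadicCube n → ℝ :=
    fun P => (2:ℝ) ^ ((P.j:ℝ) * s) * (Real.sqrt P.vol)⁻¹ * t P with hc₀def
  have hpoweq : ∀ P : DyadicCube n,
      (2:ℝ) ^ ((P.j:ℝ) * s) * (Real.sqrt P.vol)⁻¹ * P.vol ^ r = P.vol ^ e := by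
    intro P
    rw [P.sqrt_vol, P.vol_rpow r, P.vol_rpow e,
      ← Real.rpow_neg (by norm_num : (0:ℝ) ≤ 2),
      ← Real.rpow_add two_pos, ← Real.rpow_add two_pos]
    congr 1
    rw [he]
    field_simp
    ring
  have habsc₀ : ∀ P : DyadicCube n, |c₀ P|
      = (2:ℝ) ^ ((P.j:ℝ) * s) * (Real.sqrt P.vol)⁻¹ * |t P| := by
    intro P
    have hsq : 0 < Real.sqrt P.vol := Real.sqrt_pos.mpr P.vol_pos
    rw [hc₀def]
    rw [abs_mul, abs_mul, abs_of_pos (Real.rpow_pos_of_pos two_pos _),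
      abs_of_pos (inv_pos.mpr hsq)]
  have hcval : ∀ P : DyadicCube n, |c₀ P| * P.vol ^ r = P.vol ^ e * |t P| := by
    intro P
    rw [habsc₀ P]
    calc (2:ℝ) ^ ((P.j:ℝ) * s) * (Real.sqrt P.vol)⁻¹ * |t P| * P.vol ^ r
        = ((2:ℝ) ^ ((P.j:ℝ) * s) * (Real.sqrt P.vol)⁻¹ * P.vol ^ r) * |t P| := by ring
      _ = P.vol ^ e * |t P| := by rw [hpoweq P]
  have hval : ∀ P : DyadicCube n, ENNReal.ofReal (P.vol ^ e * |t P| / υ P)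
      = (ENNReal.ofReal (υ P))⁻¹
        * (ENNReal.ofReal |c₀ P| * ENNReal.ofReal (P.vol ^ r)) := by
    intro P
    rw [← hcval P, ENNReal.ofReal_div_of_pos (hpos P), ENNReal.ofReal_mul (abs_nonneg _),
      div_eq_mul_inv, mul_comm]
  have htr : ∀ P : DyadicCube n,
      truncate n P f P.j = Set.indicator P.toSet (fun _ => c₀ P) := by
    intro P
    unfold truncate
    rw [if_pos le_rfl]
    refine Set.indicator_congr fun x hx => ?_
    rw [hfdef]
    unfold scalarFn
    rw [cubeAt_eq_of_mem hx]
  have hvolS : ∀ P : DyadicCube n, volume P.toSet ≠ 0 := by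
    intro P
    rw [P.volume_toSet]
    simp [P.vol_pos]
  -- lower bound common quantity
  have hlowcore : ∀ P : DyadicCube n,
      eLpNorm (truncate n P f P.j) p volume
        = ENNReal.ofReal |c₀ P| * ENNReal.ofReal (P.vol ^ r) := by
    intro P
    rw [htr P, eLpNorm_indicator_const_eq' P.measurableSet_toSet (hvolS P) _ p hp0,
      P.volume_toSet, ENNReal.ofReal_rpow_of_pos P.vol_pos]
  constructor
  · constructor
    · -- lower bound, B case
      rw [ENNReal.ofReal_one, one_mul, hMdef]
      unfold fInftyBound
      refine iSup_le fun P => ?_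
      unfold LBvNormE
      refine le_trans ?_ (le_iSup _ P)
      rw [hval P]
      refine mul_le_mul_right ?_ _
      rw [← hlowcore P]
      exact le_lqNorm hq0 (fun j => eLpNorm (truncate n P f j) p volume) P.j
    · -- upper bound, B case
      by_cases hMtop : M = ⊤
      · rw [hMtop, ENNReal.mul_top (by simp [ENNReal.ofReal_eq_zero]; linarith)]
        exact le_top
      · set M' : ℝ := M.toReal with hM'def
        have hM'0 : 0 ≤ M' := ENNReal.toReal_nonneg
        have hMb : ∀ Q : DyadicCube n, Q.vol ^ (-s/(n:ℝ) + r - 1/2) * |t Q| / υ Q ≤ M' := by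
          intro Q
          have h1 : ENNReal.ofReal (Q.vol ^ e * |t Q| / υ Q) ≤ M := by
            rw [hMdef]
            exact le_iSup (fun P : DyadicCube n =>
              ENNReal.ofReal (P.vol ^ e * |t P| / υ P)) Q
          rw [he] at h1
          exact (ENNReal.ofReal_le_iff_le_toReal hMtop).mp h1
        unfold LBvNormE
        refine iSup_le fun P => ?_
        have haB : ∀ j : ℤ, eLpNorm (truncate n P f j) p volume
            ≤ if P.j ≤ j then ENNReal.ofReal (M' * C₁ * υ P) * ρ ^ (j - P.j).toNat
              else 0 := by
          intro j
          split_ifs with hj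
          · set A : ℝ := M' * C₁ * υ P
              * (2:ℝ) ^ ((j:ℝ) * n * r - ((j:ℝ) - (P.j:ℝ)) * n * δ₁) with hA
            have hA0 : 0 ≤ A := by
              refine mul_nonneg (mul_nonneg (mul_nonneg hM'0 hC₁.le) (hpos P).le) ?_
              exact (Real.rpow_pos_of_pos two_pos _).le
            have hmono : ∀ x, ‖truncate n P f j x‖
                ≤ ‖Set.indicator P.toSet (fun _ => A) x‖ := by
              intro x
              unfold truncate
              rw [if_pos hj]
              by_cases hx : x ∈ P.toSet
              · rw [Set.indicator_of_mem hx, Set.indicator_of_mem hx,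
                  Real.norm_eq_abs, Real.norm_eq_abs, abs_of_nonneg hA0]
                exact scalarFn_ptwise_bound hn s δ₁ r hpos hgr hMb hx hj
              · rw [Set.indicator_of_notMem hx, Set.indicator_of_notMem hx]
            calc eLpNorm (truncate n P f j) p volume
                ≤ eLpNorm (Set.indicator P.toSet (fun _ => A)) p volume :=
                  eLpNorm_mono hmono
              _ = ENNReal.ofReal |A| * (volume P.toSet) ^ r :=
                  eLpNorm_indicator_const_eq' P.measurableSet_toSet (hvolS P) _ p hp0
              _ = ENNReal.ofReal (M' * C₁ * υ P) * ρ ^ (j - P.j).toNat := by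
                  rw [abs_of_nonneg hA0, P.volume_toSet,
                    ENNReal.ofReal_rpow_of_pos P.vol_pos, hρdef,
                    ← ENNReal.ofReal_pow hρr_pos.le,
                    ← ENNReal.ofReal_mul (by positivity),
                    ← ENNReal.ofReal_mul (mul_nonneg (mul_nonneg hM'0 hC₁.le) (hpos P).le)]
                  congr 1
                  have hpow2 : (2:ℝ) ^ ((j:ℝ) * n * r - ((j:ℝ) - (P.j:ℝ)) * n * δ₁)
                      * (2:ℝ) ^ (-(P.j:ℝ) * n * r) = ρr ^ (j - P.j).toNat := by
                    rw [← Real.rpow_add two_pos, hρrdef,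
                      ← rpow_neg_int_mul (show (0:ℤ) ≤ j - P.j by omega) ((n:ℝ) * (δ₁ - r))]
                    congr 1
                    push_cast
                    ring
                  calc A * P.vol ^ r
                      = M' * C₁ * υ P
                        * ((2:ℝ) ^ ((j:ℝ) * n * r - ((j:ℝ) - (P.j:ℝ)) * n * δ₁)
                          * (2:ℝ) ^ (-(P.j:ℝ) * n * r)) := by rw [hA, P.vol_rpow r]; ring
                    _ = M' * C₁ * υ P * ρr ^ (j - P.j).toNat := by rw [hpow2]
          · have hz : truncate n P f j = (fun _ => (0:ℝ)) := by
              unfold truncate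
              rw [if_neg hj]
              rfl
            rw [hz]
            exact le_of_eq eLpNorm_zero'
        have hlq : LBnormE n p q (truncate n P f)
            ≤ geomK q ρ * ENNReal.ofReal (M' * C₁ * υ P) :=
          lqNorm_le_geom hq0 hρ1 P.j haB
        calc (ENNReal.ofReal (υ P))⁻¹ * LBnormE n p q (truncate n P f)
            ≤ (ENNReal.ofReal (υ P))⁻¹
              * (geomK q ρ * ENNReal.ofReal (M' * C₁ * υ P)) := mul_le_mul_right hlq _
          _ = (geomK q ρ * ENNReal.ofReal C₁) * ENNReal.ofReal M'
              * ((ENNReal.ofReal (υ P))⁻¹ * ENNReal.ofReal (υ P)) := by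
              rw [ENNReal.ofReal_mul (mul_nonneg hM'0 hC₁.le),
                ENNReal.ofReal_mul hM'0]
              ring
          _ = K * M := by
              rw [ENNReal.inv_mul_cancel (by simp [ENNReal.ofReal_eq_zero]; linarith [hpos P])
                ENNReal.ofReal_ne_top, mul_one, hM'def, ENNReal.ofReal_toReal hMtop, hKdef]
          _ ≤ ENNReal.ofReal (K.toReal + 1) * M := mul_le_mul_left hKC M
  · intro hptop
    have hp' : 0 < p.toReal := ENNReal.toReal_pos hp0 hptop
    have hreq : r = 1 / p.toReal := by rw [hr, ENNReal.toReal_inv, one_div]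
    constructor
    · -- lower bound, F case
      rw [ENNReal.ofReal_one, one_mul, hMdef]
      unfold fInftyBound
      refine iSup_le fun P => ?_
      unfold LFvNorm'
      refine le_trans ?_ (le_iSup _ P)
      rw [hval P]
      refine mul_le_mul_right ?_ _
      unfold LFnorm
      have hGlow : ∀ x, Set.indicator P.toSet (fun _ => ENNReal.ofReal |c₀ P|) x
          ≤ lqNorm q (fun j => ENNReal.ofReal |truncate n P f j x|) := by
        intro x
        by_cases hx : x ∈ P.toSet
        · rw [Set.indicator_of_mem hx]
          refine le_trans (le_of_eq ?_)
            (le_lqNorm hq0 (fun j => ENNReal.ofReal |truncate n P f j x|) P.j)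
          rw [htr P, Set.indicator_of_mem hx]
        · rw [Set.indicator_of_notMem hx]
          exact zero_le
      have hint : (ENNReal.ofReal |c₀ P|) ^ p.toReal * volume P.toSet
          ≤ ∫⁻ x, (lqNorm q (fun j => ENNReal.ofReal |truncate n P f j x|)) ^ p.toReal := by
        rw [← setLIntegral_const P.toSet, ← lintegral_indicator P.measurableSet_toSet]
        refine lintegral_mono fun x => ?_
        calc Set.indicator P.toSet (fun _ => (ENNReal.ofReal |c₀ P|) ^ p.toReal) x
            = (Set.indicator P.toSet (fun _ => ENNReal.ofReal |c₀ P|) x) ^ p.toReal := by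
              by_cases hx : x ∈ P.toSet
              · rw [Set.indicator_of_mem hx, Set.indicator_of_mem hx]
              · rw [Set.indicator_of_notMem hx, Set.indicator_of_notMem hx,
                  ENNReal.zero_rpow_of_pos hp']
          _ ≤ _ := ENNReal.rpow_le_rpow (hGlow x) hp'.le
        done
      calc ENNReal.ofReal |c₀ P| * ENNReal.ofReal (P.vol ^ r)
          = ((ENNReal.ofReal |c₀ P|) ^ p.toReal * volume P.toSet) ^ (1 / p.toReal) := by
            rw [ENNReal.mul_rpow_of_nonneg _ _ (by positivity), ← ENNReal.rpow_mul,
              mul_one_div, div_self hp'.ne', ENNReal.rpow_one, P.volume_toSet,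
              ENNReal.ofReal_rpow_of_pos P.vol_pos, hreq]
        _ ≤ _ := ENNReal.rpow_le_rpow hint (by positivity)
    · -- upper bound, F case
      by_cases hMtop : M = ⊤
      · rw [hMtop, ENNReal.mul_top (by simp [ENNReal.ofReal_eq_zero]; linarith)]
        exact le_top
      · set M' : ℝ := M.toReal with hM'def
        have hM'0 : 0 ≤ M' := ENNReal.toReal_nonneg
        have hMb : ∀ Q : DyadicCube n, Q.vol ^ (-s/(n:ℝ) + r - 1/2) * |t Q| / υ Q ≤ M' := by
          intro Q
          have h1 : ENNReal.ofReal (Q.vol ^ e * |t Q| / υ Q) ≤ M := by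
            rw [hMdef]
            exact le_iSup (fun P : DyadicCube n =>
              ENNReal.ofReal (P.vol ^ e * |t P| / υ P)) Q
          rw [he] at h1
          exact (ENNReal.ofReal_le_iff_le_toReal hMtop).mp h1
        unfold LFvNorm'
        refine iSup_le fun P => ?_
        set BFr : ℝ := M' * C₁ * υ P * (2:ℝ) ^ ((P.j:ℝ) * n * r) with hBFr
        have hBFr0 : 0 ≤ BFr := by
          refine mul_nonneg (mul_nonneg (mul_nonneg hM'0 hC₁.le) (hpos P).le) ?_
          exact (Real.rpow_pos_of_pos two_pos _).le
        set BF : ℝ≥0∞ := ENNReal.ofReal BFr with hBF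
        have hG : ∀ x, lqNorm q (fun j => ENNReal.ofReal |truncate n P f j x|)
            ≤ Set.indicator P.toSet (fun _ => geomK q ρ * BF) x := by
          intro x
          by_cases hx : x ∈ P.toSet
          · rw [Set.indicator_of_mem hx]
            refine lqNorm_le_geom hq0 hρ1 P.j fun j => ?_
            split_ifs with hj
            · have hb : |truncate n P f j x| ≤ BFr * ρr ^ (j - P.j).toNat := by
                unfold truncate
                rw [if_pos hj, Set.indicator_of_mem hx]
                refine le_trans (scalarFn_ptwise_bound hn s δ₁ r hpos hgr hMb hx hj) ?_
                refine le_of_eq ?_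
                have hpow2 : (2:ℝ) ^ ((P.j:ℝ) * n * r) * ρr ^ (j - P.j).toNat
                    = (2:ℝ) ^ ((j:ℝ) * n * r - ((j:ℝ) - (P.j:ℝ)) * n * δ₁) := by
                  rw [hρrdef,
                    ← rpow_neg_int_mul (show (0:ℤ) ≤ j - P.j by omega) ((n:ℝ) * (δ₁ - r)),
                    ← Real.rpow_add two_pos]
                  congr 1
                  push_cast
                  ring
                calc M' * C₁ * υ P * (2:ℝ) ^ ((j:ℝ) * n * r - ((j:ℝ) - (P.j:ℝ)) * n * δ₁)
                    = M' * C₁ * υ P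
                      * ((2:ℝ) ^ ((P.j:ℝ) * n * r) * ρr ^ (j - P.j).toNat) := by
                      rw [hpow2]
                  _ = BFr * ρr ^ (j - P.j).toNat := by rw [hBFr]; ring
              calc ENNReal.ofReal |truncate n P f j x|
                  ≤ ENNReal.ofReal (BFr * ρr ^ (j - P.j).toNat) :=
                    ENNReal.ofReal_le_ofReal hb
                _ = BF * ρ ^ (j - P.j).toNat := by
                    rw [hBF, hρdef, ← ENNReal.ofReal_pow hρr_pos.le,
                      ← ENNReal.ofReal_mul hBFr0]
            · have : truncate n P f j x = 0 := by
                unfold truncate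
                rw [if_neg hj]
                rfl
              rw [this]
              simp
          · rw [Set.indicator_of_notMem hx]
            have hzero : (fun j => ENNReal.ofReal |truncate n P f j x|)
                = (fun _ => (0:ℝ≥0∞)) := by
              funext j
              unfold truncate
              split_ifs with hj
              · rw [Set.indicator_of_notMem hx]
                simp
              · simp
            rw [hzero, lqNorm_zero hq0]
        unfold LFnorm
        have hint : ∫⁻ x, (lqNorm q (fun j => ENNReal.ofReal |truncate n P f j x|)) ^ p.toReal
            ≤ (geomK q ρ * BF) ^ p.toReal * volume P.toSet := by
          rw [← setLIntegral_const P.toSet, ← lintegral_indicator P.measurableSet_toSet]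
          refine lintegral_mono fun x => ?_
          calc (lqNorm q (fun j => ENNReal.ofReal |truncate n P f j x|)) ^ p.toReal
              ≤ (Set.indicator P.toSet (fun _ => geomK q ρ * BF) x) ^ p.toReal :=
                ENNReal.rpow_le_rpow (hG x) hp'.le
            _ = Set.indicator P.toSet (fun _ => (geomK q ρ * BF) ^ p.toReal) x := by
                by_cases hx : x ∈ P.toSet
                · rw [Set.indicator_of_mem hx, Set.indicator_of_mem hx]
                · rw [Set.indicator_of_notMem hx, Set.indicator_of_notMem hx,
                    ENNReal.zero_rpow_of_pos hp']
        have hfin : (∫⁻ x, (lqNorm q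
              (fun j => ENNReal.ofReal |truncate n P f j x|)) ^ p.toReal) ^ (1 / p.toReal)
            ≤ geomK q ρ * BF * (volume P.toSet) ^ (1 / p.toReal) := by
          refine le_trans (ENNReal.rpow_le_rpow hint (by positivity)) ?_
          rw [ENNReal.mul_rpow_of_nonneg _ _ (by positivity), ← ENNReal.rpow_mul,
            mul_one_div, div_self hp'.ne', ENNReal.rpow_one]
        calc (ENNReal.ofReal (υ P))⁻¹ * (∫⁻ x, (lqNorm q
              (fun j => ENNReal.ofReal |truncate n P f j x|)) ^ p.toReal) ^ (1 / p.toReal)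
            ≤ (ENNReal.ofReal (υ P))⁻¹
              * (geomK q ρ * BF * (volume P.toSet) ^ (1 / p.toReal)) :=
              mul_le_mul_right hfin _
          _ = (ENNReal.ofReal (υ P))⁻¹
              * (geomK q ρ * ENNReal.ofReal (M' * C₁ * υ P)) := by
              congr 1
              rw [P.volume_toSet, ENNReal.ofReal_rpow_of_pos P.vol_pos, ← hreq,
                hBF, mul_assoc, ← ENNReal.ofReal_mul hBFr0]
              congr 2
              have hpow2 : (2:ℝ) ^ ((P.j:ℝ) * n * r) * (2:ℝ) ^ (-(P.j:ℝ) * n * r)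
                  = 1 := by
                rw [← Real.rpow_add two_pos,
                  show (P.j:ℝ) * n * r + -(P.j:ℝ) * n * r = 0 by ring, Real.rpow_zero]
              calc BFr * P.vol ^ r
                  = M' * C₁ * υ P
                    * ((2:ℝ) ^ ((P.j:ℝ) * n * r) * (2:ℝ) ^ (-(P.j:ℝ) * n * r)) := by
                    rw [hBFr, P.vol_rpow r]; ring
                _ = M' * C₁ * υ P := by rw [hpow2, mul_one]
          _ = (geomK q ρ * ENNReal.ofReal C₁) * ENNReal.ofReal M'
              * ((ENNReal.ofReal (υ P))⁻¹ * ENNReal.ofReal (υ P)) := by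
              rw [ENNReal.ofReal_mul (mul_nonneg hM'0 hC₁.le),
                ENNReal.ofReal_mul hM'0]
              ring
          _ = K * M := by
              rw [ENNReal.inv_mul_cancel (by simp [ENNReal.ofReal_eq_zero]; linarith [hpos P])
                ENNReal.ofReal_ne_top, mul_one, hM'def, ENNReal.ofReal_toReal hMtop, hKdef]
          _ ≤ ENNReal.ofReal (K.toReal + 1) * M := mul_le_mul_left hKC M
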